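/- Under the spectral hypotheses, for every k ∈ ℕ, every s ∈ {1,…,d} and every s-dimensional subspace V ⊆ ℝ^d, there exist an index j̄ = j̄(k,V) ∈ ℕ and a constant C = C(k,V) > 0 such that for all j ≥ k + j̄: ∠( Φ(j,k)V, Φ(j,k)𝒯_k(V) ) ≤ C · q^{j−k}, where q := max_{i=1,…,ℓ−1} σ_{i+1}^+/σ_i^- (with q := 0 if ℓ = 1). -/

import Mathlib

open Filter

noncomputable section

abbrev Euc (d : ℕ) := EuclideanSpace ℝ (Fin d)

/-- Angle between the lines spanned by two vectors. -/
noncomputable def vecAngle {d : ℕ} (v w : Euc d) : ℝ :=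
  Real.arccos (|(inner ℝ v w : ℝ)| / (‖v‖ * ‖w‖))

/-- Largest principal angle between two subspaces of equal dimension. -/
noncomputable def subAngle {d : ℕ} (V W : Submodule ℝ (Euc d)) : ℝ :=
  Real.arccos (sInf {c : ℝ | ∃ v ∈ V, ‖v‖ = 1 ∧
    c = sSup {r : ℝ | ∃ w ∈ W, ‖w‖ = 1 ∧ r = (inner ℝ v w : ℝ)}})

/-- Forward product `A (m+n-1) ⋯ A m`. -/
noncomputable def PhiF {d : ℕ} (A : ℕ → (Euc d →L[ℝ] Euc d)) (m : ℕ) : ℕ → (Euc d →L[ℝ] Euc d)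
  | 0 => 1
  | n + 1 => A (m + n) ∘L PhiF A m n

/-- Solution operator `Φ(n,m) = A_{n-1} ⋯ A_m` for `n ≥ m`,
`Φ(n,m) = A_n⁻¹ ⋯ A_{m-1}⁻¹` for `n < m`. -/
noncomputable def Phi {d : ℕ} (A : ℕ → (Euc d →L[ℝ] Euc d)) (n m : ℕ) : Euc d →L[ℝ] Euc d :=
  if m ≤ n then PhiF A m (n - m) else Ring.inverse (PhiF A n (m - n))

/-- `a_{m,n}(V) = Σ_{j=m}^n ∠(Φ(j-1,0)V, Φ(j,0)V)`. -/
noncomputable def angSum {d : ℕ} (A : ℕ → (Euc d →L[ℝ] Euc d)) (V : Submodule ℝ (Euc d))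
    (m n : ℕ) : ℝ :=
  ∑ j ∈ Finset.Icc m n, subAngle (V.map (Phi A (j - 1) 0 : Euc d →ₗ[ℝ] Euc d)) (V.map (Phi A j 0 : Euc d →ₗ[ℝ] Euc d))

/-- Fiber projector `𝒫_{k,i} = P_{k,i}^s − P_{k,i+1}^s`. -/
noncomputable def fiberP {d : ℕ} (P : ℕ → ℕ → (Euc d →L[ℝ] Euc d)) (k i : ℕ) :
    Euc d →L[ℝ] Euc d :=
  P k i - P k (i + 1)

/-- The spectral fiber `𝒲_k^i = range 𝒫_{k,i}`. -/
noncomputable def fiberW {d : ℕ} (P : ℕ → ℕ → (Euc d →L[ℝ] Euc d)) (k i : ℕ) :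
    Submodule ℝ (Euc d) :=
  LinearMap.range (fiberP P k i : Euc d →ₗ[ℝ] Euc d)

/-- The trace space `𝒯_k(V) = Σ_{i=1}^ℓ 𝒫_{k,i}(Q_{k,i}^s V)`, where
`Q_{k,i}^s V = range(P_{k,i}^s) ∩ V`. -/
noncomputable def traceSpace {d : ℕ} (P : ℕ → ℕ → (Euc d →L[ℝ] Euc d)) (ℓ k : ℕ)
    (V : Submodule ℝ (Euc d)) : Submodule ℝ (Euc d) :=
  ⨆ i ∈ Finset.Icc 1 ℓ, (LinearMap.range (P k i : Euc d →ₗ[ℝ] Euc d) ⊓ V).map (fiberP P k i : Euc d →ₗ[ℝ] Euc d)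

/-- `V` is a trace space at time `k`: a (direct) sum of subspaces of the fibers. -/
def IsTraceAt {d : ℕ} (P : ℕ → ℕ → (Euc d →L[ℝ] Euc d)) (ℓ k : ℕ)
    (V : Submodule ℝ (Euc d)) : Prop :=
  ∃ W : ℕ → Submodule ℝ (Euc d),
    (∀ i, 1 ≤ i → i ≤ ℓ → W i ≤ fiberW P k i) ∧ V = ⨆ i ∈ Finset.Icc 1 ℓ, W i

/-!
For `v ∈ V` let `t = ∑ᵢ 𝒫_{k,i} Qᵢ v ∈ 𝒯_k(V)`, where `Qᵢ` is the orthogonal projection onto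
`range P_{k,i} ∩ V`. Since `Q₁ v = v`, `v - t = ∑_{i ≥ 2} 𝒫_{k,i} (v - Qᵢ v)`, and forward in time
the `i`-th fiber grows at most like `(σ_i^+)^{j-k}`. On `V` the defect `v - Qᵢ v` vanishes as soon
as `(I - P_{k,i}) v = 0`, so by finite dimensionality it is bounded by `‖(I - P_{k,i}) v‖`, and the
unstable estimate run backwards gives `‖(I - P_{k,i}) v‖ ≤ K (σ_{i-1}^-)^{-(j-k)} ‖Φ(j,k) v‖`.
Hence `‖Φ(j,k) v - Φ(j,k) t‖ ≤ C q^{j-k} ‖Φ(j,k) v‖`, and a relative error `ε` of this kind turns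
a unit vector by an angle at most `arcsin ε ≤ π ε / 2`.
-/

open Real

theorem subAngle_le_arccos {d : ℕ} {S T : Submodule ℝ (Euc d)} (hS : S ≠ ⊥) {b : ℝ}
    (h : ∀ v ∈ S, ‖v‖ = 1 → ∃ w ∈ T, ‖w‖ = 1 ∧ b ≤ inner ℝ v w) :
    subAngle S T ≤ arccos b := by
  obtain ⟨x, hxS, hx0⟩ := Submodule.exists_mem_ne_zero_of_ne_bot hS
  refine arccos_le_arccos (le_csInf ⟨_, _, S.smul_mem ‖x‖⁻¹ hxS, norm_smul_inv_norm hx0, rfl⟩ ?_)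
  rintro _ ⟨v, hvS, hv, rfl⟩
  obtain ⟨w, hwT, hw, hbw⟩ := h v hvS hv
  have hbdd : BddAbove {r : ℝ | ∃ w ∈ T, ‖w‖ = 1 ∧ r = inner ℝ v w} := by
    refine ⟨1, ?_⟩
    rintro _ ⟨w, -, hw, rfl⟩
    simpa [hv, hw] using real_inner_le_norm v w
  exact hbw.trans (le_csSup hbdd ⟨w, hwT, hw, rfl⟩)

theorem sqrt_one_sub_sq_le_inner_normalize {E : Type*} [NormedAddCommGroup E]
    [InnerProductSpace ℝ E] {u t : E} (hu : ‖u‖ = 1) {ε : ℝ} (hε : ε < 1)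
    (hut : ‖u - t‖ ≤ ε) : √(1 - ε ^ 2) ≤ inner ℝ u (‖t‖⁻¹ • t) := by
  have ht : 0 < ‖t‖ := by
    have := norm_sub_norm_le u t
    linarith
  have hε0 : 0 ≤ ε := (norm_nonneg _).trans hut
  have hb : √(1 - ε ^ 2) ^ 2 = 1 - ε ^ 2 := Real.sq_sqrt (by nlinarith)
  have hexp : ‖u - t‖ ^ 2 = ‖u‖ ^ 2 - 2 * inner ℝ u t + ‖t‖ ^ 2 := norm_sub_sq_real u t
  -- `2 b ‖t‖ ≤ b² + ‖t‖² = 1 - ε² + ‖t‖² ≤ 2 ⟪u, t⟫`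
  have key : √(1 - ε ^ 2) * ‖t‖ ≤ inner ℝ u t := by
    nlinarith [sq_nonneg (√(1 - ε ^ 2) - ‖t‖), norm_nonneg (u - t)]
  rw [real_inner_smul_right, le_inv_mul_iff₀ ht]
  linarith

theorem arccos_sqrt_one_sub_sq_le {ε : ℝ} (h0 : 0 ≤ ε) (h1 : ε ≤ 1) :
    arccos √(1 - ε ^ 2) ≤ π / 2 * ε := by
  set θ := arccos √(1 - ε ^ 2)
  have hsin : sin θ = ε := by
    rw [Real.sin_arccos, Real.sq_sqrt (by nlinarith), sub_sub_cancel, Real.sqrt_sq h0]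
  have hjordan : 2 / π * θ ≤ sin θ :=
    Real.mul_le_sin (Real.arccos_nonneg _) (Real.arccos_le_pi_div_two.mpr (Real.sqrt_nonneg _))
  rw [hsin] at hjordan
  rw [div_mul_eq_mul_div, div_le_iff₀ Real.pi_pos] at hjordan
  linarith

theorem subAngle_le_pi_mul_of_forall_exists_norm_sub_le {d : ℕ} {S T : Submodule ℝ (Euc d)}
    (hS : S ≠ ⊥) {ε : ℝ} (hε : 0 ≤ ε) (h : ∀ v ∈ S, ∃ t ∈ T, ‖v - t‖ ≤ ε * ‖v‖) :
    subAngle S T ≤ π * ε := by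
  have hπ := Real.pi_pos
  rcases lt_or_ge ε 1 with hε1 | hε1
  · calc subAngle S T ≤ arccos √(1 - ε ^ 2) := by
          refine subAngle_le_arccos hS fun v hvS hv => ?_
          obtain ⟨t, htT, hvt⟩ := h v hvS
          rw [hv, mul_one] at hvt
          have ht0 : t ≠ 0 := by
            rintro rfl
            rw [sub_zero, hv] at hvt
            linarith
          exact ⟨_, T.smul_mem _ htT, norm_smul_inv_norm ht0,
            sqrt_one_sub_sq_le_inner_normalize hv hε1 hvt⟩
      _ ≤ π / 2 * ε := arccos_sqrt_one_sub_sq_le hε hε1.le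
      _ ≤ π * ε := by nlinarith
  · calc subAngle S T ≤ π := Real.arccos_le_pi _
      _ ≤ π * ε := le_mul_of_one_le_right hπ.le hε1

theorem LinearMap.exists_norm_le_mul_norm_of_ker_le {𝕜 E F G : Type*} [NontriviallyNormedField 𝕜]
    [CompleteSpace 𝕜] [NormedAddCommGroup E] [NormedSpace 𝕜 E] [FiniteDimensional 𝕜 E]
    [NormedAddCommGroup F] [NormedSpace 𝕜 F] [NormedAddCommGroup G] [NormedSpace 𝕜 G]
    (f : E →ₗ[𝕜] F) (g : E →ₗ[𝕜] G) (h : LinearMap.ker f ≤ LinearMap.ker g) :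
    ∃ c, 0 ≤ c ∧ ∀ x, ‖g x‖ ≤ c * ‖f x‖ := by
  -- `g` factors through `range f ≃ E ⧸ ker f`, where every linear map is bounded
  let φ : LinearMap.range f →L[𝕜] G :=
    ((LinearMap.ker f).liftQ g h ∘ₗ f.quotKerEquivRange.symm.toLinearMap).toContinuousLinearMap
  refine ⟨‖φ‖, norm_nonneg _, fun x => ?_⟩
  have hφ : φ ⟨f x, LinearMap.mem_range_self f x⟩ = g x := by
    simp [φ, f.quotKerEquivRange_symm_apply_image]
  rw [← hφ]
  exact φ.le_opNorm _

theorem Submodule.exists_norm_sub_starProjection_le {E F : Type*} [NormedAddCommGroup E]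
    [InnerProductSpace ℝ E] [FiniteDimensional ℝ E] [NormedAddCommGroup F] [NormedSpace ℝ F]
    (V W : Submodule ℝ E) (T : E →L[ℝ] F) (hW : ∀ v ∈ V, T v = 0 → v ∈ W) :
    ∃ c, 0 ≤ c ∧ ∀ v ∈ V, ‖v - W.starProjection v‖ ≤ c * ‖T v‖ := by
  obtain ⟨c, hc0, hc⟩ := LinearMap.exists_norm_le_mul_norm_of_ker_le (T.toLinearMap ∘ₗ V.subtype)
    ((LinearMap.id - W.starProjection.toLinearMap) ∘ₗ V.subtype) fun v hv => by
      have hvW : (v : E) ∈ W := hW v v.2 (by simpa using hv)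
      simp [W.starProjection_eq_self_iff.mpr hvW]
  exact ⟨c, hc0, fun v hv => by simpa using hc ⟨v, hv⟩⟩

theorem ContinuousLinearMap.norm_sub_apply_le_of_comp_eq {E F : Type*} [NormedAddCommGroup E]
    [NormedSpace ℝ E] [NormedAddCommGroup F] [NormedSpace ℝ F] {Φ : E →L[ℝ] F} {Ψ : F →L[ℝ] E}
    (hΨ : Ψ ∘L Φ = 1) {P : E →L[ℝ] E} {Q : F →L[ℝ] F} (hPQ : Q ∘L Φ = Φ ∘L P) (x : E) :
    ‖(1 - P) x‖ ≤ ‖Ψ ∘L (1 - Q)‖ * ‖Φ x‖ := by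
  calc ‖(1 - P) x‖ = ‖(Ψ ∘L Φ) ((1 - P) x)‖ := by rw [hΨ, one_apply_eq_self]
    _ = ‖(Ψ ∘L (1 - Q)) (Φ x)‖ := by
      have := congr(Ψ ($hPQ x))
      simp only [ContinuousLinearMap.comp_apply] at this
      simp [this]
    _ ≤ ‖Ψ ∘L (1 - Q)‖ * ‖Φ x‖ := le_opNorm _ _

section SolutionOperator

variable {d : ℕ} {A : ℕ → (Euc d →L[ℝ] Euc d)}

theorem isUnit_PhiF (hA : ∀ n, IsUnit (A n)) (m : ℕ) : ∀ n, IsUnit (PhiF A m n)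
  | 0 => isUnit_one
  | n + 1 => (hA (m + n)).mul (isUnit_PhiF hA m n)

theorem Phi_comp_Phi_of_le (hA : ∀ n, IsUnit (A n)) {k j : ℕ} (hkj : k ≤ j) :
    Phi A k j ∘L Phi A j k = 1 := by
  rcases hkj.eq_or_lt with rfl | hlt
  · simp only [Phi, le_refl, if_true, Nat.sub_self, PhiF]; rfl
  · simp only [Phi, if_pos hkj, if_neg hlt.not_ge]
    exact Ring.inverse_mul_cancel _ (isUnit_PhiF hA k _)

theorem Phi_injective_of_le (hA : ∀ n, IsUnit (A n)) {k j : ℕ} (hkj : k ≤ j) :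
    Function.Injective (Phi A j k) :=
  Function.LeftInverse.injective (g := Phi A k j) fun x => by
    simpa using congr($(Phi_comp_Phi_of_le hA hkj) x)

end SolutionOperator

/-- The paper's `q = max_{i<ℓ} σ_{i+1}^+ / σ_i^-`; for `ℓ = 1` it is `sSup ∅ = 0`. -/
def gapRatio (ℓ : ℕ) (σm σp : ℕ → ℝ) : ℝ :=
  sSup {x : ℝ | ∃ i, 1 ≤ i ∧ i < ℓ ∧ x = σp (i + 1) / σm i}

section GapRatio

variable {ℓ : ℕ} {σm σp : ℕ → ℝ}

theorem gapRatio_nonneg (hσ0 : ∀ i, 1 ≤ i → i ≤ ℓ → 0 < σm i)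
    (hσ1 : ∀ i, 1 ≤ i → i ≤ ℓ → σm i ≤ σp i) : 0 ≤ gapRatio ℓ σm σp := by
  refine Real.sSup_nonneg fun x ⟨i, h1, hi, hx⟩ => hx ▸ div_nonneg ?_ (hσ0 i h1 hi.le).le
  exact (hσ0 (i + 1) (by omega) hi).le.trans (hσ1 (i + 1) (by omega) hi)

theorem div_le_gapRatio {i : ℕ} (h1 : 1 ≤ i) (hi : i < ℓ) :
    σp (i + 1) / σm i ≤ gapRatio ℓ σm σp := by
  refine le_csSup ?_ ⟨i, h1, hi, rfl⟩
  refine ((Set.finite_Icc 1 ℓ).image fun i => σp (i + 1) / σm i).bddAbove.mono ?_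
  rintro _ ⟨i, h1, hi, rfl⟩
  exact ⟨i, ⟨h1, hi.le⟩, rfl⟩

end GapRatio

section TraceSpace

variable {d : ℕ} (P : ℕ → ℕ → (Euc d →L[ℝ] Euc d)) (ℓ k : ℕ) (V : Submodule ℝ (Euc d))

/-- `Q_{k,i}^s V = range(P_{k,i}^s) ∩ V`. -/
def traceSlice (i : ℕ) : Submodule ℝ (Euc d) :=
  LinearMap.range (P k i : Euc d →ₗ[ℝ] Euc d) ⊓ V

def traceApprox (v : Euc d) : Euc d :=
  ∑ i ∈ Finset.Icc 1 ℓ, fiberP P k i ((traceSlice P k V i).starProjection v)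

theorem traceApprox_mem_traceSpace (v : Euc d) : traceApprox P ℓ k V v ∈ traceSpace P ℓ k V :=
  Submodule.sum_mem _ fun i hi => Submodule.mem_iSup_of_mem i <| Submodule.mem_iSup_of_mem hi <|
    Submodule.mem_map_of_mem (Submodule.starProjection_apply_mem _ v)

variable {P ℓ k V}

theorem sum_fiberP_apply (hP1 : P k 1 = 1) (hPl : P k (ℓ + 1) = 0) (x : Euc d) :
    ∑ i ∈ Finset.Icc 1 ℓ, fiberP P k i x = x := by
  have htel := Finset.sum_Ico_sub (fun i => P k i x) (by omega : 1 ≤ ℓ + 1)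
  rw [Finset.Ico_add_one_right_eq_Icc] at htel
  simp only [fiberP, FunLike.coe_sub, Pi.sub_apply]
  rw [← neg_inj, ← Finset.sum_neg_distrib]
  simpa [hP1, hPl] using htel

theorem sub_traceApprox (hP1 : P k 1 = 1) (hPl : P k (ℓ + 1) = 0) (v : Euc d) :
    v - traceApprox P ℓ k V v =
      ∑ i ∈ Finset.Icc 1 ℓ, fiberP P k i (v - (traceSlice P k V i).starProjection v) := by
  calc v - traceApprox P ℓ k V v
      = ∑ i ∈ Finset.Icc 1 ℓ, fiberP P k i v - traceApprox P ℓ k V v := by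
        rw [sum_fiberP_apply hP1 hPl]
    _ = _ := by simp only [traceApprox, ← Finset.sum_sub_distrib, map_sub]

theorem starProjection_traceSlice_one (hP1 : P k 1 = 1) {v : Euc d} (hv : v ∈ V) :
    (traceSlice P k V 1).starProjection v = v :=
  Submodule.starProjection_eq_self_iff.mpr <| Submodule.mem_inf.mpr ⟨⟨v, by simp [hP1]⟩, hv⟩

theorem exists_norm_sub_starProjection_traceSlice_le (i : ℕ) :
    ∃ c, 0 ≤ c ∧ ∀ v ∈ V,
      ‖v - (traceSlice P k V i).starProjection v‖ ≤ c * ‖(1 - P k i) v‖ :=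
  V.exists_norm_sub_starProjection_le (traceSlice P k V i) (1 - P k i) fun v hv hv0 =>
    Submodule.mem_inf.mpr ⟨⟨v, (sub_eq_zero.mp hv0).symm⟩, hv⟩

end TraceSpace

section Dichotomy

variable {d ℓ : ℕ} {A : ℕ → (Euc d →L[ℝ] Euc d)} {P : ℕ → ℕ → (Euc d →L[ℝ] Euc d)}
  {K : ℝ} {σm σp : ℕ → ℝ}

theorem norm_Phi_fiberP_le (hK : 0 ≤ K)
    (hσ0 : ∀ i, 1 ≤ i → i ≤ ℓ → 0 < σm i)
    (hσ1 : ∀ i, 1 ≤ i → i ≤ ℓ → σm i ≤ σp i)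
    (hσ2 : ∀ i, 1 ≤ i → i < ℓ → σp (i + 1) < σm i)
    (hbndS : ∀ i, 1 ≤ i → i ≤ ℓ → ∀ n m : ℕ, m ≤ n →
      ‖Phi A n m ∘L P m (i + 1)‖ ≤ K * (if i = ℓ then (0 : ℝ) else σp (i + 1)) ^ (n - m))
    {i : ℕ} (h1 : 1 ≤ i) (hi : i < ℓ) {k j : ℕ} (hkj : k ≤ j) (y : Euc d) :
    ‖Phi A j k (fiberP P k (i + 1) y)‖ ≤ 2 * K * σp (i + 1) ^ (j - k) * ‖y‖ := by
  have hσ : 0 ≤ σp (i + 1) := (hσ0 _ (by omega) hi).le.trans (hσ1 _ (by omega) hi)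
  have hnext : (if i + 1 = ℓ then (0 : ℝ) else σp (i + 1 + 1)) ^ (j - k) ≤ σp (i + 1) ^ (j - k) := by
    refine pow_le_pow_left₀ ?_ ?_ _ <;> split_ifs with h
    · exact le_rfl
    · exact (hσ0 _ (by omega) (by omega)).le.trans (hσ1 _ (by omega) (by omega))
    · exact hσ
    · exact (hσ2 _ (by omega) (by omega)).le.trans (hσ1 _ (by omega) (by omega))
  have hcur := hbndS i h1 hi.le j k hkj
  rw [if_neg hi.ne] at hcur
  have hnxt := (hbndS (i + 1) (by omega) hi j k hkj).trans (mul_le_mul_of_nonneg_left hnext hK)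
  calc ‖Phi A j k (fiberP P k (i + 1) y)‖
      = ‖(Phi A j k ∘L P k (i + 1)) y - (Phi A j k ∘L P k (i + 1 + 1)) y‖ := by
        simp [fiberP]
    _ ≤ ‖Phi A j k ∘L P k (i + 1)‖ * ‖y‖ + ‖Phi A j k ∘L P k (i + 1 + 1)‖ * ‖y‖ :=
        norm_sub_le_of_le (ContinuousLinearMap.le_opNorm _ _) (ContinuousLinearMap.le_opNorm _ _)
    _ ≤ K * σp (i + 1) ^ (j - k) * ‖y‖ + K * σp (i + 1) ^ (j - k) * ‖y‖ := by gcongr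
    _ = 2 * K * σp (i + 1) ^ (j - k) * ‖y‖ := by ring

theorem norm_sub_P_apply_le (hA : ∀ n, IsUnit (A n))
    (hcomm : ∀ n m i, 1 ≤ i → i ≤ ℓ + 1 → P n i ∘L Phi A n m = Phi A n m ∘L P m i)
    (hbndU : ∀ i, 1 ≤ i → i ≤ ℓ → ∀ n m : ℕ, m ≤ n →
      ‖Phi A m n ∘L (1 - P n (i + 1))‖ ≤ K * (σm i ^ (n - m))⁻¹)
    {i : ℕ} (h1 : 1 ≤ i) (hi : i ≤ ℓ) {k j : ℕ} (hkj : k ≤ j) (x : Euc d) :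
    ‖(1 - P k (i + 1)) x‖ ≤ K * (σm i ^ (j - k))⁻¹ * ‖Phi A j k x‖ :=
  (ContinuousLinearMap.norm_sub_apply_le_of_comp_eq (Phi_comp_Phi_of_le hA hkj)
    (hcomm j k (i + 1) (by omega) (by omega)) x).trans
    (mul_le_mul_of_nonneg_right (hbndU i h1 hi j k hkj) (norm_nonneg _))

theorem norm_Phi_fiberP_le_gapRatio_pow (hA : ∀ n, IsUnit (A n)) (hK : 0 ≤ K)
    (hσ0 : ∀ i, 1 ≤ i → i ≤ ℓ → 0 < σm i)
    (hσ1 : ∀ i, 1 ≤ i → i ≤ ℓ → σm i ≤ σp i)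
    (hσ2 : ∀ i, 1 ≤ i → i < ℓ → σp (i + 1) < σm i)
    (hcomm : ∀ n m i, 1 ≤ i → i ≤ ℓ + 1 → P n i ∘L Phi A n m = Phi A n m ∘L P m i)
    (hbndS : ∀ i, 1 ≤ i → i ≤ ℓ → ∀ n m : ℕ, m ≤ n →
      ‖Phi A n m ∘L P m (i + 1)‖ ≤ K * (if i = ℓ then (0 : ℝ) else σp (i + 1)) ^ (n - m))
    (hbndU : ∀ i, 1 ≤ i → i ≤ ℓ → ∀ n m : ℕ, m ≤ n →
      ‖Phi A m n ∘L (1 - P n (i + 1))‖ ≤ K * (σm i ^ (n - m))⁻¹)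
    {i : ℕ} (h1 : 1 ≤ i) (hi : i < ℓ) {k j : ℕ} (hkj : k ≤ j) {c : ℝ} (hc : 0 ≤ c)
    {x y : Euc d} (hyx : ‖y‖ ≤ c * ‖(1 - P k (i + 1)) x‖) :
    ‖Phi A j k (fiberP P k (i + 1) y)‖ ≤
      2 * K ^ 2 * c * gapRatio ℓ σm σp ^ (j - k) * ‖Phi A j k x‖ := by
  have hσp : 0 ≤ σp (i + 1) := (hσ0 _ (by omega) hi).le.trans (hσ1 _ (by omega) hi)
  have hratio : σp (i + 1) ^ (j - k) * (σm i ^ (j - k))⁻¹ ≤ gapRatio ℓ σm σp ^ (j - k) := by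
    rw [← inv_pow, ← mul_pow]
    exact pow_le_pow_left₀ (div_nonneg hσp (hσ0 i h1 hi.le).le) (div_le_gapRatio h1 hi) _
  calc ‖Phi A j k (fiberP P k (i + 1) y)‖ ≤ 2 * K * σp (i + 1) ^ (j - k) * ‖y‖ :=
        norm_Phi_fiberP_le hK hσ0 hσ1 hσ2 hbndS h1 hi hkj y
    _ ≤ 2 * K * σp (i + 1) ^ (j - k) * (c * (K * (σm i ^ (j - k))⁻¹ * ‖Phi A j k x‖)) := by
        gcongr
        exact hyx.trans (mul_le_mul_of_nonneg_left
          (norm_sub_P_apply_le hA hcomm hbndU h1 hi.le hkj x) hc)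
    _ = 2 * K ^ 2 * c * (σp (i + 1) ^ (j - k) * (σm i ^ (j - k))⁻¹) * ‖Phi A j k x‖ := by ring
    _ ≤ 2 * K ^ 2 * c * gapRatio ℓ σm σp ^ (j - k) * ‖Phi A j k x‖ := by gcongr

theorem exists_norm_Phi_sub_traceApprox_le (hA : ∀ n, IsUnit (A n)) (hK : 0 ≤ K)
    (hσ0 : ∀ i, 1 ≤ i → i ≤ ℓ → 0 < σm i)
    (hσ1 : ∀ i, 1 ≤ i → i ≤ ℓ → σm i ≤ σp i)
    (hσ2 : ∀ i, 1 ≤ i → i < ℓ → σp (i + 1) < σm i)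
    (hP1 : ∀ n, P n 1 = 1) (hPl : ∀ n, P n (ℓ + 1) = 0)
    (hcomm : ∀ n m i, 1 ≤ i → i ≤ ℓ + 1 → P n i ∘L Phi A n m = Phi A n m ∘L P m i)
    (hbndS : ∀ i, 1 ≤ i → i ≤ ℓ → ∀ n m : ℕ, m ≤ n →
      ‖Phi A n m ∘L P m (i + 1)‖ ≤ K * (if i = ℓ then (0 : ℝ) else σp (i + 1)) ^ (n - m))
    (hbndU : ∀ i, 1 ≤ i → i ≤ ℓ → ∀ n m : ℕ, m ≤ n →
      ‖Phi A m n ∘L (1 - P n (i + 1))‖ ≤ K * (σm i ^ (n - m))⁻¹)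
    (k : ℕ) (V : Submodule ℝ (Euc d)) :
    ∃ C, 0 < C ∧ ∀ j, k ≤ j → ∀ v ∈ V,
      ‖Phi A j k v - Phi A j k (traceApprox P ℓ k V v)‖ ≤
        C * gapRatio ℓ σm σp ^ (j - k) * ‖Phi A j k v‖ := by
  choose c hc0 hc using exists_norm_sub_starProjection_traceSlice_le (P := P) (k := k) (V := V)
  set q := gapRatio ℓ σm σp
  have hq : 0 ≤ q := gapRatio_nonneg hσ0 hσ1
  refine ⟨1 + ∑ i ∈ Finset.Icc 1 ℓ, 2 * K ^ 2 * c i,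
    add_pos_of_pos_of_nonneg one_pos (Finset.sum_nonneg fun i _ => by have := hc0 i; positivity),
    fun j hkj v hv => ?_⟩
  have hterm : ∀ i ∈ Finset.Icc 1 ℓ,
      ‖Phi A j k (fiberP P k i (v - (traceSlice P k V i).starProjection v))‖ ≤
        2 * K ^ 2 * c i * q ^ (j - k) * ‖Phi A j k v‖ := by
    intro i hi
    obtain ⟨hi1, hiℓ⟩ := Finset.mem_Icc.mp hi
    obtain rfl | ⟨i, h1, rfl⟩ : i = 1 ∨ ∃ i', 1 ≤ i' ∧ i = i' + 1 :=
      (eq_or_ne i 1).imp_right fun h => ⟨i - 1, by omega, by omega⟩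
    · have := hc0 1
      simp only [starProjection_traceSlice_one (hP1 k) hv, sub_self, map_zero, norm_zero]
      positivity
    · exact norm_Phi_fiberP_le_gapRatio_pow hA hK hσ0 hσ1 hσ2 hcomm hbndS hbndU h1 (by omega) hkj
        (hc0 _) (hc _ v hv)
  calc ‖Phi A j k v - Phi A j k (traceApprox P ℓ k V v)‖
      = ‖∑ i ∈ Finset.Icc 1 ℓ,
          Phi A j k (fiberP P k i (v - (traceSlice P k V i).starProjection v))‖ := by
        rw [← map_sub, sub_traceApprox (hP1 k) (hPl k), map_sum]
    _ ≤ ∑ i ∈ Finset.Icc 1 ℓ, 2 * K ^ 2 * c i * q ^ (j - k) * ‖Phi A j k v‖ :=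
        (norm_sum_le _ _).trans (Finset.sum_le_sum hterm)
    _ = (∑ i ∈ Finset.Icc 1 ℓ, 2 * K ^ 2 * c i) * q ^ (j - k) * ‖Phi A j k v‖ := by
        rw [Finset.sum_mul, Finset.sum_mul]
    _ ≤ (1 + ∑ i ∈ Finset.Icc 1 ℓ, 2 * K ^ 2 * c i) * q ^ (j - k) * ‖Phi A j k v‖ := by
        gcongr
        linarith

end Dichotomy

theorem angle_to_traceSpace_decay_general
    {d : ℕ} (A : ℕ → (Euc d →L[ℝ] Euc d)) (hA : ∀ n, IsUnit (A n))
    (ℓ : ℕ) (K : ℝ) (hK : 1 ≤ K)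
    (σm σp : ℕ → ℝ)
    (hσ0 : ∀ i, 1 ≤ i → i ≤ ℓ → 0 < σm i)
    (hσ1 : ∀ i, 1 ≤ i → i ≤ ℓ → σm i ≤ σp i)
    (hσ2 : ∀ i, 1 ≤ i → i < ℓ → σp (i + 1) < σm i)
    (P : ℕ → ℕ → (Euc d →L[ℝ] Euc d))
    (hP1 : ∀ n, P n 1 = 1)
    (hPl : ∀ n, P n (ℓ + 1) = 0)
    (hcomm : ∀ n m i, 1 ≤ i → i ≤ ℓ + 1 → P n i ∘L Phi A n m = Phi A n m ∘L P m i)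
    (hbndS : ∀ i, 1 ≤ i → i ≤ ℓ → ∀ n m : ℕ, m ≤ n →
      ‖Phi A n m ∘L P m (i + 1)‖ ≤ K * (if i = ℓ then (0 : ℝ) else σp (i + 1)) ^ (n - m))
    (hbndU : ∀ i, 1 ≤ i → i ≤ ℓ → ∀ n m : ℕ, m ≤ n →
      ‖Phi A m n ∘L (1 - P n (i + 1))‖ ≤ K * (σm i ^ (n - m))⁻¹)
    (k s : ℕ) (hs1 : 1 ≤ s)
    (V : Submodule ℝ (Euc d)) (hV : Module.finrank ℝ V = s) :
    ∃ jb : ℕ, ∃ C : ℝ, 0 < C ∧ ∀ j : ℕ, k + jb ≤ j →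
      subAngle (V.map (Phi A j k : Euc d →ₗ[ℝ] Euc d)) ((traceSpace P ℓ k V).map (Phi A j k : Euc d →ₗ[ℝ] Euc d)) ≤
        C * (sSup {x : ℝ | ∃ i, 1 ≤ i ∧ i < ℓ ∧ x = σp (i + 1) / σm i}) ^ (j - k) := by
  obtain ⟨C, hC, happrox⟩ := exists_norm_Phi_sub_traceApprox_le hA (by linarith) hσ0 hσ1 hσ2
    hP1 hPl hcomm hbndS hbndU k V
  refine ⟨0, π * C, by positivity, fun j hj => ?_⟩
  have hkj : k ≤ j := by omega
  have hΦV : V.map (Phi A j k : Euc d →ₗ[ℝ] Euc d) ≠ ⊥ := by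
    have hV0 : V ≠ ⊥ := by
      rintro rfl
      simp only [finrank_bot] at hV
      omega
    obtain ⟨x, hxV, hx0⟩ := Submodule.exists_mem_ne_zero_of_ne_bot hV0
    exact (Submodule.ne_bot_iff _).mpr ⟨_, Submodule.mem_map_of_mem hxV,
      (map_ne_zero_iff _ (Phi_injective_of_le hA hkj)).mpr hx0⟩
  rw [mul_assoc]
  refine subAngle_le_pi_mul_of_forall_exists_norm_sub_le hΦV
    (mul_nonneg hC.le (pow_nonneg (gapRatio_nonneg hσ0 hσ1) _)) ?_
  rintro _ ⟨v, hv, rfl⟩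
  exact ⟨_, Submodule.mem_map_of_mem (traceApprox_mem_traceSpace P ℓ k V v), happrox j hkj v hv⟩

/-- **Theorem 3.4 / Th2, reduction theorem.** Under the spectral hypotheses,
for every `k`, `s` and every `s`-dimensional subspace `V ⊆ ℝ^d` there are an index `j̄` and a
constant `C > 0` such that for all `j ≥ k + j̄`,
`∠(Φ(j,k)V, Φ(j,k)𝒯_k(V)) ≤ C q^{j−k}` with `q = max_{i<ℓ} σ_{i+1}^+/σ_i^-` (`q = 0` if
`ℓ = 1`; note `sSup ∅ = 0` in `ℝ`). -/
theorem angle_to_traceSpace_decay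
    {d : ℕ} (A : ℕ → (Euc d →L[ℝ] Euc d)) (hA : ∀ n, IsUnit (A n))
    (hbd : ∃ Cb : ℝ, ∀ n, ‖A n‖ + ‖Ring.inverse (A n)‖ ≤ Cb)
    (ℓ : ℕ) (hℓ : 1 ≤ ℓ) (K : ℝ) (hK : 1 ≤ K)
    (σm σp : ℕ → ℝ)
    (hσ0 : ∀ i, 1 ≤ i → i ≤ ℓ → 0 < σm i)
    (hσ1 : ∀ i, 1 ≤ i → i ≤ ℓ → σm i ≤ σp i)
    (hσ2 : ∀ i, 1 ≤ i → i < ℓ → σp (i + 1) < σm i)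
    (P : ℕ → ℕ → (Euc d →L[ℝ] Euc d))
    (hproj : ∀ n i, 1 ≤ i → i ≤ ℓ + 1 → P n i ∘L P n i = P n i)
    (hP1 : ∀ n, P n 1 = 1)
    (hPl : ∀ n, P n (ℓ + 1) = 0)
    (hcomm : ∀ n m i, 1 ≤ i → i ≤ ℓ + 1 → P n i ∘L Phi A n m = Phi A n m ∘L P m i)
    (hrange : ∀ n i, 1 ≤ i → i ≤ ℓ → LinearMap.range (P n (i + 1) : Euc d →ₗ[ℝ] Euc d) ≤ LinearMap.range (P n i : Euc d →ₗ[ℝ] Euc d))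
    (hker : ∀ n i, 1 ≤ i → i ≤ ℓ → LinearMap.ker (P n i : Euc d →ₗ[ℝ] Euc d) ≤ LinearMap.ker (P n (i + 1) : Euc d →ₗ[ℝ] Euc d))
    (hbndS : ∀ i, 1 ≤ i → i ≤ ℓ → ∀ n m : ℕ, m ≤ n →
      ‖Phi A n m ∘L P m (i + 1)‖ ≤ K * (if i = ℓ then (0 : ℝ) else σp (i + 1)) ^ (n - m))
    (hbndU : ∀ i, 1 ≤ i → i ≤ ℓ → ∀ n m : ℕ, m ≤ n →
      ‖Phi A m n ∘L (1 - P n (i + 1))‖ ≤ K * (σm i ^ (n - m))⁻¹)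
    (k s : ℕ) (hs1 : 1 ≤ s) (hsd : s ≤ d)
    (V : Submodule ℝ (Euc d)) (hV : Module.finrank ℝ V = s) :
    ∃ jb : ℕ, ∃ C : ℝ, 0 < C ∧ ∀ j : ℕ, k + jb ≤ j →
      subAngle (V.map (Phi A j k : Euc d →ₗ[ℝ] Euc d)) ((traceSpace P ℓ k V).map (Phi A j k : Euc d →ₗ[ℝ] Euc d)) ≤
        C * (sSup {x : ℝ | ∃ i, 1 ≤ i ∧ i < ℓ ∧ x = σp (i + 1) / σm i}) ^ (j - k) :=
  angle_to_traceSpace_decay_general A hA ℓ K hK σm σp hσ0 hσ1 hσ2 P hP1 hPl hcomm hbndS hbndU k s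
    hs1 V hV
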